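/- arXiv:2102.06392 — 2 statements merged into one kernel-verified Lean document; each statement's English description precedes it below -/
import Mathlib

section
/- (Lemma 1) Let H ∈ ℂ^{M×K} have columns h_1, …, h_K, let F ∈ ℂ^{M×K} be any beamforming matrix, let I ⊆ {1,…,M} be such that Ĥ = H_{(I,:)} has full column rank K, let W ∈ ℂ^{M×K} be the zero-padded zero-forcing extra beamformer built from Ĥ, and let a ∈ ℂ^K satisfy, for every k: a_k ≠ 0 and conj(h_k^H F_{(:,k)}) · a_k is a nonnegative real number (phase alignment; note h_k^H W_{(:,k)} = 1). Then the updated beamformer F' = F + W · diag(a) satisfies, for every k ∈ {1,…,K}: (i) |h_k^H F'_{(:,k)}|² > |h_k^H F_{(:,k)}|² (strictly increased beamforming gain), and (ii) h_k^H F'_{(:,ℓ)} = h_k^H F_{(:,ℓ)} for every ℓ ≠ k (no additional interference). -/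
/-!
Since `W` vanishes off the rows in `I`, `Hᴴ W = Ĥᴴ Ĥ (Ĥᴴ Ĥ)⁻¹ = 1`, so the update changes
`Hᴴ F` by exactly `diag(a)`: off-diagonal entries are untouched, and each diagonal entry
`c = h_kᴴ f_k` becomes `c + a_k`, with `|c + a_k|² = |c|² + 2 Re(c̄ a_k) + |a_k|² > |c|²`
because the alignment makes `c̄ a_k ≥ 0`.
-/

open Matrix

/-- The row-restriction of `H` to the rows indexed by the finite set `I`. -/
def rowRestrict {M K : ℕ} (H : Matrix (Fin M) (Fin K) ℂ) (I : Finset (Fin M)) :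
    Matrix ↥I (Fin K) ℂ := fun i k => H i.1 k

/-- The zero-padded zero-forcing extra beamformer built from `H` and the antenna set `I`. -/
noncomputable def zfPad {M K : ℕ} (H : Matrix (Fin M) (Fin K) ℂ) (I : Finset (Fin M)) :
    Matrix (Fin M) (Fin K) ℂ := fun m k =>
  if h : m ∈ I then
    (rowRestrict H I * ((rowRestrict H I)ᴴ * rowRestrict H I)⁻¹) ⟨m, h⟩ k
  else 0

theorem Matrix.isUnit_of_rank_eq_card {n R : Type*} [Fintype n] [DecidableEq n] [Field R]
    {A : Matrix n n R} (h : A.rank = Fintype.card n) : IsUnit A := by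
  have hrange : LinearMap.range A.mulVecLin = ⊤ :=
    Submodule.eq_top_of_finrank_eq (by simpa [Matrix.rank] using h)
  exact Matrix.mulVec_surjective_iff_isUnit.mp (LinearMap.range_eq_top.mp hrange)

theorem Complex.sq_norm_lt_sq_norm_add {c a : ℂ} (ha : a ≠ 0) (h : 0 ≤ (star c * a).re) :
    ‖c‖ ^ 2 < ‖c + a‖ ^ 2 := by
  have hre : (c * star a).re = (star c * a).re := by simp
  rw [Complex.sq_norm, Complex.sq_norm, Complex.normSq_add, ← star_def, hre]
  have := Complex.normSq_pos.mpr ha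
  linarith

theorem conjTranspose_mul_zfPad {M K : ℕ} (H : Matrix (Fin M) (Fin K) ℂ) (I : Finset (Fin M)) :
    Hᴴ * zfPad H I = (rowRestrict H I)ᴴ *
      (rowRestrict H I * ((rowRestrict H I)ᴴ * rowRestrict H I)⁻¹) := by
  ext k l
  rw [mul_apply, mul_apply, Finset.univ_eq_attach, Finset.sum_attach_eq_sum_dite]
  simp only [zfPad, mul_dite, mul_zero]
  rfl

open scoped ComplexOrder in
theorem conjTranspose_mul_zfPad_eq_one {M K : ℕ} (H : Matrix (Fin M) (Fin K) ℂ)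
    (I : Finset (Fin M)) (hrank : (rowRestrict H I).rank = K) :
    Hᴴ * zfPad H I = 1 := by
  have hgram : IsUnit ((rowRestrict H I)ᴴ * rowRestrict H I) :=
    isUnit_of_rank_eq_card (by rw [rank_conjTranspose_mul_self, hrank, Fintype.card_fin])
  rw [conjTranspose_mul_zfPad, ← Matrix.mul_assoc,
    mul_nonsing_inv _ ((isUnit_iff_isUnit_det _).mp hgram)]

theorem cpr_update_gain_and_no_interference_general {M K : ℕ}
    (H F : Matrix (Fin M) (Fin K) ℂ) (I : Finset (Fin M))
    (hrank : (rowRestrict H I).rank = K)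
    (a : Fin K → ℂ)
    (ha0 : ∀ k, a k ≠ 0)
    (halign : ∀ k, ∃ r : ℝ, 0 ≤ r ∧ star ((Hᴴ * F) k k) * a k = (r : ℂ))
    (F' : Matrix (Fin M) (Fin K) ℂ)
    (hF' : F' = F + zfPad H I * Matrix.diagonal a) :
    ∀ k, ‖(Hᴴ * F) k k‖ ^ 2 < ‖(Hᴴ * F') k k‖ ^ 2 ∧
      ∀ ℓ, ℓ ≠ k → (Hᴴ * F') k ℓ = (Hᴴ * F) k ℓ := by
  have hupdate : Hᴴ * F' = Hᴴ * F + diagonal a := by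
    rw [hF', Matrix.mul_add, ← Matrix.mul_assoc, conjTranspose_mul_zfPad_eq_one H I hrank,
      Matrix.one_mul]
  intro k
  refine ⟨?_, fun ℓ hℓ => by simp [hupdate, diagonal_apply_ne' _ hℓ]⟩
  obtain ⟨r, hr, hra⟩ := halign k
  rw [hupdate, Matrix.add_apply, diagonal_apply_eq]
  exact Complex.sq_norm_lt_sq_norm_add (ha0 k) (by rw [hra]; exact hr)

/-- Lemma 1: the CPR update with a zero-forcing extra beamformer strictly increases every
beamforming gain and adds no interference. -/
theorem cpr_update_gain_and_no_interference {M K : ℕ} (hK : 0 < K) (hKM : K ≤ M)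
    (H F : Matrix (Fin M) (Fin K) ℂ) (I : Finset (Fin M))
    (hrank : (rowRestrict H I).rank = K)
    (a : Fin K → ℂ)
    (ha0 : ∀ k, a k ≠ 0)
    (halign : ∀ k, ∃ r : ℝ, 0 ≤ r ∧ star ((Hᴴ * F) k k) * a k = (r : ℂ))
    (F' : Matrix (Fin M) (Fin K) ℂ)
    (hF' : F' = F + zfPad H I * Matrix.diagonal a) :
    ∀ k, ‖(Hᴴ * F) k k‖ ^ 2 < ‖(Hᴴ * F') k k‖ ^ 2 ∧
      ∀ ℓ, ℓ ≠ k → (Hᴴ * F') k ℓ = (Hᴴ * F) k ℓ :=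
  cpr_update_gain_and_no_interference_general H F I hrank a ha0 halign F' hF'
end

section
/- Let h ∈ ℂ^M, P_ant > 0 and P_tot = M · P_ant. Define f' ∈ ℂ^M by f'_m = √P_ant · h_m / |h_m| if h_m ≠ 0 and f'_m = √P_ant if h_m = 0. Then |f'_m|² = P_ant for all m, ‖f'‖² = P_tot, |h^H f'|² = P_ant · (∑_{m=1}^M |h_m|)², and f' maximizes the beamforming gain: for every f ∈ ℂ^M with ‖f‖² ≤ P_tot and |f_m|² ≤ P_ant for all m, one has |h^H f|² ≤ |h^H f'|². -/
/-!
Every term of `h^H f` has modulus `|h_m| |f_m| ≤ √P_ant |h_m|`, so the triangle inequality bounds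
`|h^H f|` by `√P_ant ∑ |h_m|`. The beamformer `f'` co-phases each entry with `h_m`, which makes every
term `conj h_m · f'_m` the nonnegative real `√P_ant |h_m|`, so the triangle inequality is an equality.
-/

open Finset

section PhaseAligned

variable {𝕜 : Type*} [RCLike 𝕜]

noncomputable def phaseAligned (c z : 𝕜) : 𝕜 :=
  if z = 0 then c else c * z / (‖z‖ : 𝕜)

theorem norm_phaseAligned (c z : 𝕜) : ‖phaseAligned c z‖ = ‖c‖ := by
  unfold phaseAligned
  split_ifs with hz
  · rfl
  · have hz' : ‖z‖ ≠ 0 := norm_ne_zero_iff.mpr hz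
    rw [norm_div, norm_mul, RCLike.norm_ofReal, abs_norm, mul_div_cancel_right₀ _ hz']

theorem star_mul_phaseAligned (c z : 𝕜) : star z * phaseAligned c z = c * (‖z‖ : 𝕜) := by
  unfold phaseAligned
  split_ifs with hz
  · simp [hz]
  · have hz' : (‖z‖ : 𝕜) ≠ 0 := RCLike.ofReal_ne_zero.mpr (norm_ne_zero_iff.mpr hz)
    have hconj : star z * z = (‖z‖ : 𝕜) ^ 2 := RCLike.conj_mul z
    field_simp
    linear_combination c * hconj

end PhaseAligned

theorem norm_sum_star_mul_le {ι R : Type*} [NormedRing R] [StarRing R] [NormedStarGroup R]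
    (s : Finset ι) (h f : ι → R) {r : ℝ} (hf : ∀ i ∈ s, ‖f i‖ ≤ r) :
    ‖∑ i ∈ s, star (h i) * f i‖ ≤ r * ∑ i ∈ s, ‖h i‖ :=
  calc ‖∑ i ∈ s, star (h i) * f i‖
      ≤ ∑ i ∈ s, ‖star (h i) * f i‖ := norm_sum_le _ _
    _ ≤ ∑ i ∈ s, ‖h i‖ * r := by
        gcongr with i hi
        exact (norm_mul_le _ _).trans <| by rw [norm_star]; gcongr; exact hf i hi
    _ = r * ∑ i ∈ s, ‖h i‖ := by rw [← sum_mul, mul_comm]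

/-- The beamformer `f'` with `f'_m = √P_ant · h_m/|h_m|` (and `f'_m = √P_ant` when `h_m = 0`)
uses the maximum power at every antenna, uses the maximum total power `P_tot = M·P_ant`,
achieves the gain `P_ant (∑_m |h_m|)²`, and maximizes the MISO beamforming gain among all
beamformers satisfying the total power constraint and the per-antenna power constraint. -/
theorem miso_optimal_beamformer {M : ℕ} (h : Fin M → ℂ) (Pant Ptot : ℝ)
    (hPant : 0 < Pant) (hPtot : Ptot = M * Pant)
    (f' : Fin M → ℂ)
    (hf' : ∀ m, f' m = if h m = 0 then (Real.sqrt Pant : ℂ)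
      else (Real.sqrt Pant : ℂ) * h m / (‖h m‖ : ℂ)) :
    (∀ m, ‖f' m‖ ^ 2 = Pant) ∧
    (∑ m, ‖f' m‖ ^ 2) = Ptot ∧
    ‖∑ m, star (h m) * f' m‖ ^ 2 = Pant * (∑ m, ‖h m‖) ^ 2 ∧
    ∀ f : Fin M → ℂ, (∑ m, ‖f m‖ ^ 2) ≤ Ptot →
      (∀ m, ‖f m‖ ^ 2 ≤ Pant) →
      ‖∑ m, star (h m) * f m‖ ^ 2 ≤ ‖∑ m, star (h m) * f' m‖ ^ 2 := by
  have hf'_eq : ∀ m, f' m = phaseAligned (Real.sqrt Pant : ℂ) (h m) := hf'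
  have hpower : ∀ m, ‖f' m‖ ^ 2 = Pant := fun m => by
    rw [hf'_eq, norm_phaseAligned, Complex.norm_real, Real.norm_eq_abs, sq_abs,
      Real.sq_sqrt hPant.le]
  have hgain : ‖∑ m, star (h m) * f' m‖ = Real.sqrt Pant * ∑ m, ‖h m‖ := by
    simp_rw [hf'_eq, star_mul_phaseAligned, ← mul_sum]
    rw [← RCLike.ofReal_sum, norm_mul, Complex.norm_real, RCLike.norm_ofReal,
      Real.norm_of_nonneg (Real.sqrt_nonneg _), abs_of_nonneg (by positivity)]
  refine ⟨hpower, by simp [hpower, hPtot], ?_, fun f _ hper => ?_⟩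
  · rw [hgain, mul_pow, Real.sq_sqrt hPant.le]
  · rw [hgain]
    gcongr
    exact norm_sum_star_mul_le _ h f fun m _ => Real.le_sqrt_of_sq_le (hper m)
end
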